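/- For every integer k ≥ 2, the entropy of the golden mean k-tree shift satisfies the strict bounds L(k) < h^{(k)} < U(k). -/

import Mathlib

open Filter

/-- `(B_n(0), B_n(1))` for hard-core labelings of the complete rooted `k`-ary tree. -/
noncomputable def Bp (k : ℕ) : ℕ → ℝ × ℝ
  | 0 => (1, 1)
  | n + 1 => (((Bp k n).1 + (Bp k n).2) ^ k, (Bp k n).1 ^ k)

/-- `B_n = B_n(0) + B_n(1)`. -/
noncomputable def Bt (k n : ℕ) : ℝ := (Bp k n).1 + (Bp k n).2

/-- The lower bound `L(k)`, with `r_0 = 1/2` and `r_1 = 2^k/(2^k+1)`. -/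
noncomputable def Lbd (k : ℕ) : ℝ :=
  ((k : ℝ) - 1) / k * Real.log 2
    + ((k : ℝ) - 1) / k ^ 2 * Real.log (1 + (1 / 2 : ℝ) ^ k)
    + ((k : ℝ) - 1) / k ^ 3 * Real.log (1 + ((2 : ℝ) ^ k / ((2 : ℝ) ^ k + 1)) ^ k)

/-- The upper bound `U(k)`, with `r_0 = 1/2` and `r_1 = 2^k/(2^k+1)`. -/
noncomputable def Ubd (k : ℕ) : ℝ :=
  ((k : ℝ) - 1) / k * Real.log 2
    + ((k : ℝ) - 1) / k ^ 2 * Real.log (1 + (1 / 2 : ℝ) ^ k)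
    + 1 / (k : ℝ) ^ 2 * Real.log (1 + ((2 : ℝ) ^ k / ((2 : ℝ) ^ k + 1)) ^ k)

/-- `r_n = B_n(0)/B_n`. -/
noncomputable def rr (k n : ℕ) : ℝ := (Bp k n).1 / Bt k n

/-- `a_n = log (1 + r_n^k)`. -/
noncomputable def aa (k n : ℕ) : ℝ := Real.log (1 + rr k n ^ k)

lemma Bp_pos (k n : ℕ) : 0 < (Bp k n).1 ∧ 0 < (Bp k n).2 := by
  induction n with
  | zero => simp [Bp]
  | succ n ih => exact ⟨pow_pos (by linarith [ih.1, ih.2]) k, pow_pos ih.1 k⟩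

lemma Bt_pos (k n : ℕ) : 0 < Bt k n := add_pos (Bp_pos k n).1 (Bp_pos k n).2

lemma rr_pos (k n : ℕ) : 0 < rr k n := div_pos (Bp_pos k n).1 (Bt_pos k n)

lemma Bt_succ (k n : ℕ) : Bt k (n + 1) = Bt k n ^ k * (1 + rr k n ^ k) := by
  have hB := (Bt_pos k n).ne'
  rw [rr, div_pow, mul_add, mul_one, mul_div_cancel₀ _ (pow_ne_zero k hB)]
  rfl

lemma log_Bt_succ (k n : ℕ) : Real.log (Bt k (n + 1)) = k * Real.log (Bt k n) + aa k n := by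
  rw [Bt_succ, Real.log_mul (pow_ne_zero k (Bt_pos k n).ne')
    (by linarith [pow_pos (rr_pos k n) k] : (0:ℝ) < 1 + rr k n ^ k).ne', Real.log_pow, aa]

lemma rr_succ (k n : ℕ) : rr k (n + 1) = Bt k n ^ k / (Bt k n ^ k + (Bp k n).1 ^ k) := rfl

lemma rr_half (k n : ℕ) : 1 / 2 ≤ rr k n := by
  cases n with
  | zero => norm_num [rr, Bt, Bp]
  | succ n =>
    rw [rr_succ]
    have hB := Bt_pos k n
    have hp := (Bp_pos k n).1
    have hpk : (Bp k n).1 ^ k ≤ Bt k n ^ k :=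
      pow_le_pow_left₀ hp.le (by simp [Bt]; linarith [(Bp_pos k n).2]) k
    have hBk := pow_pos hB k
    rw [div_le_div_iff₀ (by norm_num) (by positivity)]
    linarith

lemma rr_succ_le_r1 (k n : ℕ) (hr : 1 / 2 ≤ rr k n) :
    rr k (n + 1) ≤ 2 ^ k / (2 ^ k + 1) := by
  have hB := Bt_pos k n
  have hp := (Bp_pos k n).1
  have hpB : Bt k n / 2 ≤ (Bp k n).1 := by
    rw [rr, le_div_iff₀ hB] at hr; linarith
  have hpk : (Bt k n / 2) ^ k ≤ (Bp k n).1 ^ k := pow_le_pow_left₀ (by positivity) hpB k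
  rw [div_pow] at hpk
  have hBk := pow_pos hB k
  have h2k : (0:ℝ) < 2 ^ k := by positivity
  rw [rr_succ, div_le_div_iff₀ (by positivity) (by positivity)]
  have expand : Bt k n ^ k * (2 ^ k + 1) = 2 ^ k * (Bt k n ^ k + Bt k n ^ k / 2 ^ k) := by
    field_simp
  nlinarith [mul_le_mul_of_nonneg_left hpk h2k.le]

lemma rr_succ_lt_r1 (k : ℕ) (hk : 1 ≤ k) (n : ℕ) (hr : 1 / 2 < rr k n) :
    rr k (n + 1) < 2 ^ k / (2 ^ k + 1) := by
  have hB := Bt_pos k n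
  have hp := (Bp_pos k n).1
  have hpB : Bt k n / 2 < (Bp k n).1 := by
    rw [rr, lt_div_iff₀ hB] at hr; linarith
  have hpk : (Bt k n / 2) ^ k < (Bp k n).1 ^ k :=
    pow_lt_pow_left₀ hpB (by positivity) (by omega)
  rw [div_pow] at hpk
  have hBk := pow_pos hB k
  have h2k : (0:ℝ) < 2 ^ k := by positivity
  rw [rr_succ, div_lt_div_iff₀ (by positivity) (by positivity)]
  have expand : Bt k n ^ k * (2 ^ k + 1) = 2 ^ k * (Bt k n ^ k + Bt k n ^ k / 2 ^ k) := by
    field_simp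
  nlinarith [mul_lt_mul_of_pos_left hpk h2k]

lemma rr_one (k : ℕ) : rr k 1 = 2 ^ k / (2 ^ k + 1) := by
  norm_num [rr, Bt, Bp]

lemma rr_one_gt (k : ℕ) (hk : 1 ≤ k) : 1 / 2 < rr k 1 := by
  rw [rr_one]
  have h2k : (1:ℝ) < 2 ^ k := one_lt_pow₀ one_lt_two (by omega)
  rw [div_lt_div_iff₀ (by norm_num) (by positivity)]
  linarith

lemma rr_two_lt (k : ℕ) (hk : 1 ≤ k) : rr k 2 < 2 ^ k / (2 ^ k + 1) :=
  rr_succ_lt_r1 k hk 1 (rr_one_gt k hk)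

lemma rr_le_r1 (k n : ℕ) (hn : 1 ≤ n) : rr k n ≤ 2 ^ k / (2 ^ k + 1) := by
  obtain ⟨m, rfl⟩ := Nat.exists_eq_add_of_le' hn
  exact rr_succ_le_r1 k m (rr_half k m)

lemma aa_pos (k n : ℕ) : 0 < aa k n :=
  Real.log_pos (by nlinarith [pow_pos (rr_pos k n) k])

lemma aa_le_one (k n : ℕ) (hn : 1 ≤ n) : aa k n ≤ aa k 1 := by
  rw [aa, aa, rr_one]
  apply Real.log_le_log (by nlinarith [pow_pos (rr_pos k n) k])
  have h1 := rr_le_r1 k n hn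
  have h2 := pow_le_pow_left₀ (rr_pos k n).le h1 k
  linarith

lemma aa_two_lt_one (k : ℕ) (hk : 1 ≤ k) : aa k 2 < aa k 1 := by
  rw [aa, aa, rr_one]
  apply Real.log_lt_log (by nlinarith [pow_pos (rr_pos k 2) k])
  have h1 := rr_two_lt k hk
  have h2 := pow_lt_pow_left₀ h1 (rr_pos k 2).le (show k ≠ 0 by omega)
  linarith

/-- `P = log 2 + a_0/k + a_1/k² + a_2/k³`. -/
noncomputable def Pv (k : ℕ) : ℝ :=
  Real.log 2 + aa k 0 / (k : ℝ) + aa k 1 / (k : ℝ) ^ 2 + aa k 2 / (k : ℝ) ^ 3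

/-- `Q = P + a_1/((k-1)k³)`. -/
noncomputable def Qv (k : ℕ) : ℝ := Pv k + aa k 1 / (((k : ℝ) - 1) * (k : ℝ) ^ 3)

lemma log_Bt_three (k : ℕ) (hk : 2 ≤ k) : Real.log (Bt k 3) = (k : ℝ) ^ 3 * Pv k := by
  have hK : ((k : ℝ)) ≠ 0 := Nat.cast_ne_zero.mpr (by omega)
  have h0 : Real.log (Bt k 0) = Real.log 2 := by norm_num [Bt, Bp]
  rw [show Real.log (Bt k 3) = k * Real.log (Bt k 2) + aa k 2 from log_Bt_succ k 2,
    show Real.log (Bt k 2) = k * Real.log (Bt k 1) + aa k 1 from log_Bt_succ k 1,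
    show Real.log (Bt k 1) = k * Real.log (Bt k 0) + aa k 0 from log_Bt_succ k 0,
    h0, Pv]
  field_simp

lemma log_Bt_lower (k : ℕ) (hk : 2 ≤ k) :
    ∀ n, 3 ≤ n → (k : ℝ) ^ n * Pv k ≤ Real.log (Bt k n) := by
  have hK0 : (0:ℝ) ≤ (k : ℝ) := by positivity
  intro n hn
  induction n, hn using Nat.le_induction with
  | base => exact (log_Bt_three k hk).ge
  | succ n hn ih =>
    rw [log_Bt_succ, pow_succ]
    have h2 := mul_le_mul_of_nonneg_left ih hK0
    have h3 := aa_pos k n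
    nlinarith

lemma log_Bt_upper (k : ℕ) (hk : 2 ≤ k) :
    ∀ n, 3 ≤ n → Real.log (Bt k n) ≤
      (k : ℝ) ^ n * Pv k + aa k 1 * ((k : ℝ) ^ n / (k : ℝ) ^ 3 - 1) / ((k : ℝ) - 1) := by
  have h2K : (2:ℝ) ≤ (k : ℝ) := by exact_mod_cast hk
  have hK0 : (0:ℝ) < (k : ℝ) := by linarith
  have hK1 : ((k : ℝ) - 1) ≠ 0 := by intro hc; linarith [sub_eq_zero.mp hc]
  intro n hn
  induction n, hn using Nat.le_induction with
  | base =>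
    rw [log_Bt_three k hk]
    have : ((k : ℝ) ^ 3 / (k : ℝ) ^ 3 - 1) = 0 := by field_simp; norm_num
    rw [this]
    simp
  | succ n hn ih =>
    rw [log_Bt_succ, pow_succ]
    have h2 := mul_le_mul_of_nonneg_left ih hK0.le
    have h3 := aa_le_one k n (by omega)
    have key : (k : ℝ) * ((k : ℝ) ^ n * Pv k + aa k 1 * ((k : ℝ) ^ n / (k : ℝ) ^ 3 - 1) / ((k : ℝ) - 1)) + aa k 1
        = (k : ℝ) ^ n * (k : ℝ) * Pv k
          + aa k 1 * ((k : ℝ) ^ n * (k : ℝ) / (k : ℝ) ^ 3 - 1) / ((k : ℝ) - 1) := by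
      field_simp
      ring
    linarith

lemma Pv_nonneg (k : ℕ) (hk : 2 ≤ k) : 0 ≤ Pv k := by
  have h2K : (2:ℝ) ≤ (k : ℝ) := by exact_mod_cast hk
  have hK0 : (0:ℝ) < (k : ℝ) := by linarith
  have l2 := Real.log_nonneg one_le_two
  have a0 := (aa_pos k 0).le
  have a1 := (aa_pos k 1).le
  have a2 := (aa_pos k 2).le
  rw [Pv]
  have h1 : 0 ≤ aa k 0 / (k : ℝ) := by positivity
  have h2 : 0 ≤ aa k 1 / (k : ℝ) ^ 2 := by positivity
  have h3 : 0 ≤ aa k 2 / (k : ℝ) ^ 3 := by positivity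
  linarith

lemma log_Bt_upper' (k : ℕ) (hk : 2 ≤ k) (n : ℕ) (hn : 3 ≤ n) :
    Real.log (Bt k n) ≤ (k : ℝ) ^ n * Qv k := by
  have h2K : (2:ℝ) ≤ (k : ℝ) := by exact_mod_cast hk
  have hK0 : (0:ℝ) < (k : ℝ) := by linarith
  have hK1 : (0:ℝ) < (k : ℝ) - 1 := by linarith
  have key : (k : ℝ) ^ n * Qv k
      = ((k : ℝ) ^ n * Pv k + aa k 1 * ((k : ℝ) ^ n / (k : ℝ) ^ 3 - 1) / ((k : ℝ) - 1))
        + aa k 1 / ((k : ℝ) - 1) := by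
    rw [Qv]
    field_simp
    ring
  have h1 := log_Bt_upper k hk n hn
  have h2 : 0 ≤ aa k 1 / ((k : ℝ) - 1) := div_nonneg (aa_pos k 1).le hK1.le
  linarith

/-- For every `k ≥ 2`, the entropy `h^{(k)}` of the golden mean `k`-tree shift
satisfies the strict bounds `L(k) < h^{(k)} < U(k)`. -/
theorem golden_mean_tree_entropy_bounds (k : ℕ) (hk : 2 ≤ k) (h : ℝ)
    (hh : Tendsto (fun n : ℕ => ((k : ℝ) - 1) * Real.log (Bt k n) / ((k : ℝ) ^ (n + 1) - 1))
      atTop (nhds h)) :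
    Lbd k < h ∧ h < Ubd k := by
  have h2K : (2:ℝ) ≤ (k : ℝ) := by exact_mod_cast hk
  have hK0 : (0:ℝ) < (k : ℝ) := by linarith
  have hK1 : (0:ℝ) < (k : ℝ) - 1 := by linarith
  have hKne : (k : ℝ) ≠ 0 := hK0.ne'
  have hK1ne : (k : ℝ) - 1 ≠ 0 := hK1.ne'
  have hD : ∀ n : ℕ, (0:ℝ) < (k : ℝ) ^ (n + 1) - 1 := by
    intro n
    have : (1:ℝ) < (k : ℝ) ^ (n + 1) := one_lt_pow₀ (by linarith) (Nat.succ_ne_zero n)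
    linarith
  -- lower bound on h
  have lower : ∀ n ≥ 3, ((k : ℝ) - 1) * Pv k / (k : ℝ)
      ≤ ((k : ℝ) - 1) * Real.log (Bt k n) / ((k : ℝ) ^ (n + 1) - 1) := by
    intro n hn
    have hS := log_Bt_lower k hk n hn
    have hP := Pv_nonneg k hk
    rw [div_le_div_iff₀ hK0 (hD n)]
    have e1 : (((k : ℝ) - 1) * (k : ℝ)) * ((k : ℝ) ^ n * Pv k)
        ≤ (((k : ℝ) - 1) * (k : ℝ)) * Real.log (Bt k n) :=
      mul_le_mul_of_nonneg_left hS (by positivity)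
    have e2 : (k : ℝ) ^ (n + 1) = (k : ℝ) ^ n * (k : ℝ) := pow_succ _ _
    nlinarith [mul_nonneg hK1.le hP]
  have hlow : ((k : ℝ) - 1) * Pv k / (k : ℝ) ≤ h :=
    ge_of_tendsto hh (eventually_atTop.mpr ⟨3, lower⟩)
  -- upper bound on h
  have upper : ∀ n ≥ 3, ((k : ℝ) - 1) * Real.log (Bt k n) / ((k : ℝ) ^ (n + 1) - 1)
      ≤ ((k : ℝ) - 1) * Qv k / ((k : ℝ) - ((k : ℝ)⁻¹) ^ n) := by
    intro n hn
    have hS := log_Bt_upper' k hk n hn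
    have hinv1 : ((k : ℝ)⁻¹) ^ n ≤ 1 := pow_le_one₀ (by positivity) (by
      rw [inv_le_one_iff₀]; right; linarith)
    have hden : (0:ℝ) < (k : ℝ) - ((k : ℝ)⁻¹) ^ n := by linarith
    rw [div_le_div_iff₀ (hD n) hden]
    have h1 : ((k : ℝ)⁻¹) ^ n * (k : ℝ) ^ n = 1 := by
      rw [← mul_pow, inv_mul_cancel₀ hKne, one_pow]
    have hI : ((k : ℝ) - ((k : ℝ)⁻¹) ^ n) * (k : ℝ) ^ n = (k : ℝ) ^ (n + 1) - 1 := by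
      rw [sub_mul, h1, pow_succ]; ring
    calc ((k : ℝ) - 1) * Real.log (Bt k n) * ((k : ℝ) - ((k : ℝ)⁻¹) ^ n)
        ≤ ((k : ℝ) - 1) * ((k : ℝ) ^ n * Qv k) * ((k : ℝ) - ((k : ℝ)⁻¹) ^ n) :=
          mul_le_mul_of_nonneg_right (mul_le_mul_of_nonneg_left hS hK1.le) hden.le
      _ = ((k : ℝ) - 1) * Qv k * (((k : ℝ) - ((k : ℝ)⁻¹) ^ n) * (k : ℝ) ^ n) := by ring
      _ = ((k : ℝ) - 1) * Qv k * ((k : ℝ) ^ (n + 1) - 1) := by rw [hI]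
  have hinv : Tendsto (fun n : ℕ => ((k : ℝ)⁻¹) ^ n) atTop (nhds 0) := by
    apply tendsto_pow_atTop_nhds_zero_of_lt_one (by positivity)
    rw [inv_lt_one_iff₀]; right; linarith
  have hgden : Tendsto (fun n : ℕ => (k : ℝ) - ((k : ℝ)⁻¹) ^ n) atTop (nhds (k : ℝ)) := by
    have := (tendsto_const_nhds (x := (k : ℝ)) (f := atTop)).sub hinv
    rwa [sub_zero] at this
  have hg : Tendsto (fun n : ℕ => ((k : ℝ) - 1) * Qv k / ((k : ℝ) - ((k : ℝ)⁻¹) ^ n))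
      atTop (nhds (((k : ℝ) - 1) * Qv k / (k : ℝ))) :=
    tendsto_const_nhds.div hgden hKne
  have hup : h ≤ ((k : ℝ) - 1) * Qv k / (k : ℝ) :=
    le_of_tendsto_of_tendsto hh hg (eventually_atTop.mpr ⟨3, upper⟩)
  -- identify the bounds with Lbd and Ubd
  have ha0 : aa k 0 = Real.log (1 + (1 / 2 : ℝ) ^ k) := by
    norm_num [aa, rr, Bt, Bp]
  have ha1 : aa k 1 = Real.log (1 + ((2 : ℝ) ^ k / ((2 : ℝ) ^ k + 1)) ^ k) := by
    rw [aa, rr_one]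
  have hLP : ((k : ℝ) - 1) * Pv k / (k : ℝ)
      = Lbd k + ((k : ℝ) - 1) * aa k 2 / (k : ℝ) ^ 4 := by
    rw [Pv, Lbd, ha0, ha1]
    field_simp
  have hUQ : Ubd k = ((k : ℝ) - 1) * Qv k / (k : ℝ)
      + ((k : ℝ) - 1) * (aa k 1 - aa k 2) / (k : ℝ) ^ 4 := by
    rw [Ubd, Qv, Pv, ha0, ha1]
    field_simp
    ring
  constructor
  · have h4 : 0 < ((k : ℝ) - 1) * aa k 2 / (k : ℝ) ^ 4 :=
      div_pos (mul_pos hK1 (aa_pos k 2)) (by positivity)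
    linarith
  · have h4 : 0 < ((k : ℝ) - 1) * (aa k 1 - aa k 2) / (k : ℝ) ^ 4 :=
      div_pos (mul_pos hK1 (sub_pos.mpr (aa_two_lt_one k (by omega)))) (by positivity)
    linarith
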